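/- Let P and Q be orthogonal projections on a complex Hilbert space H. Then M_10(P,Q) = M_01(P,Q) = {0} and ||P - Q|| = 1 hold if and only if Ran Q = G(Ran P, X) for a closed densely defined operator X from Ran P to (Ran P)^perp that is unbounded, i.e., not norm-continuous on its domain. -/

import Mathlib

/-!
Write `K = Ran P` and `L = Ran Q`. Since `M₀₁ = Kᗮ ⊓ L = 0`, the projection `P` is injective on
`L`, so `X (P g) = (1 - P) g` for `g ∈ L` defines an operator from `P L ⊆ K` to `Kᗮ` whose graph
`{(x, y) | x ∈ K, y ∈ Kᗮ, x + y ∈ L}` is closed and whose graph subspace is `L`; `M₁₀ = K ⊓ Lᗮ = 0`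
says exactly that `P L` is dense in `K`. A bound `‖X x‖ ≤ C ‖x‖` reads `‖(1 - P) g‖ ≤ C ‖P g‖` on
`L`, and by density it also yields `‖P h‖ ≤ C ‖(1 - P) h‖` on `Lᗮ`. Splitting
`(P - Q) f = P (1 - Q) f - (1 - P) Q f` into orthogonal parts then gives
`‖P - Q‖ ≤ C / √(1 + C²) < 1`. Conversely, if `‖P - Q‖ = k < 1` then `(P - Q) g = -(1 - P) g` on
`L` gives `‖(1 - P) g‖ ≤ k / √(1 - k²) ‖P g‖`. As `‖P - Q‖ ≤ 1` always, `‖P - Q‖ = 1` exactly when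
`X` is unbounded.
-/

open scoped InnerProductSpace

theorem le_div_sqrt_one_add_sq_mul {u v w C : ℝ} (hu : 0 ≤ u) (hw : 0 ≤ w) (hC : 0 ≤ C)
    (huv : u ≤ C * v) (huvw : w ^ 2 = u ^ 2 + v ^ 2) : u ≤ C / √(1 + C ^ 2) * w := by
  have hs : 0 < √(1 + C ^ 2) := Real.sqrt_pos.mpr (by positivity)
  rw [div_mul_eq_mul_div, le_div_iff₀ hs, ← pow_le_pow_iff_left₀ (by positivity) (by positivity)
    two_ne_zero, mul_pow, Real.sq_sqrt (by positivity)]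
  nlinarith [mul_le_mul huv huv hu (hu.trans huv)]

theorem le_div_sqrt_one_sub_sq_mul {u v w k : ℝ} (hu : 0 ≤ u) (hv : 0 ≤ v) (hk : 0 ≤ k)
    (hk1 : k < 1) (huw : u ≤ k * w) (huvw : w ^ 2 = u ^ 2 + v ^ 2) :
    u ≤ k / √(1 - k ^ 2) * v := by
  have hs : 0 < √(1 - k ^ 2) := Real.sqrt_pos.mpr (by nlinarith)
  rw [div_mul_eq_mul_div, le_div_iff₀ hs, ← pow_le_pow_iff_left₀ (by positivity) (by positivity)
    two_ne_zero, mul_pow, Real.sq_sqrt (by nlinarith)]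
  nlinarith [mul_le_mul huw huw hu (hu.trans huw)]

theorem div_sqrt_one_add_sq_lt_one (C : ℝ) : C / √(1 + C ^ 2) < 1 := by
  rw [div_lt_one (Real.sqrt_pos.mpr (by positivity))]
  exact (le_abs_self C).trans_lt (Real.lt_sqrt (abs_nonneg C) |>.mpr (by rw [sq_abs]; linarith))

namespace Submodule

variable {𝕜 E : Type*} [RCLike 𝕜] [NormedAddCommGroup E] [InnerProductSpace 𝕜 E]

theorem setOf_mem_and_mem_eq_singleton_zero_iff (M N : Submodule 𝕜 E) :
    {f | f ∈ M ∧ f ∈ N} = {0} ↔ M ⊓ N = ⊥ :=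
  SetLike.coe_set_eq (p := M ⊓ N) (q := ⊥)

section TwoSubspaces

variable {K L : Submodule 𝕜 E} [K.HasOrthogonalProjection]

theorem norm_starProjection_sub_starProjection_le [L.HasOrthogonalProjection] {c : ℝ}
    (hc : 0 ≤ c) (hL : ∀ g ∈ L, ‖Kᗮ.starProjection g‖ ≤ c * ‖g‖)
    (hLperp : ∀ h ∈ Lᗮ, ‖K.starProjection h‖ ≤ c * ‖h‖) :
    ‖K.starProjection - L.starProjection‖ ≤ c := by
  refine ContinuousLinearMap.opNorm_le_bound _ hc fun f => ?_
  set g := L.starProjection f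
  set h := Lᗮ.starProjection f
  have hdecomp : (K.starProjection - L.starProjection) f
      = K.starProjection h + Kᗮ.starProjection (-g) := by
    simp only [sub_apply, map_neg, starProjection_orthogonal_val, g, h, map_sub]
    abel
  have horth : ⟪K.starProjection h, Kᗮ.starProjection (-g)⟫_𝕜 = 0 :=
    inner_right_of_mem_orthogonal (K.starProjection_apply_mem h) (Kᗮ.starProjection_apply_mem _)
  have hh := hLperp h (Lᗮ.starProjection_apply_mem f)
  have hg := hL (-g) (neg_mem (L.starProjection_apply_mem f))
  have hf : ‖f‖ ^ 2 = ‖g‖ ^ 2 + ‖h‖ ^ 2 := norm_sq_eq_add_norm_sq_starProjection f L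
  rw [norm_neg] at hg
  rw [← pow_le_pow_iff_left₀ (norm_nonneg _) (by positivity) two_ne_zero, hdecomp, sq,
    norm_add_sq_eq_norm_sq_add_norm_sq_of_inner_eq_zero _ _ horth, mul_pow, hf]
  nlinarith [mul_le_mul hh hh (norm_nonneg _) (by positivity),
    mul_le_mul hg hg (norm_nonneg _) (by positivity)]

theorem norm_starProjection_sub_starProjection_le_one [L.HasOrthogonalProjection] :
    ‖K.starProjection - L.starProjection‖ ≤ 1 :=
  norm_starProjection_sub_starProjection_le zero_le_one
    (fun g _ => by simpa using Kᗮ.norm_starProjection_apply_le g)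
    (fun h _ => by simpa using K.norm_starProjection_apply_le h)

theorem le_topologicalClosure_map_starProjection [CompleteSpace E] (hKL : K ⊓ Lᗮ = ⊥) :
    K ≤ (L.map (K.starProjection : E →ₗ[𝕜] E)).topologicalClosure := by
  intro f hf
  rw [← orthogonal_orthogonal_eq_closure, mem_orthogonal]
  intro v hv
  have hPv : K.starProjection v = 0 := by
    rw [← mem_bot 𝕜, ← hKL]
    refine ⟨K.starProjection_apply_mem v, (mem_orthogonal _ _).mpr fun g hg => ?_⟩
    rw [← inner_starProjection_left_eq_right]
    exact inner_right_of_mem_orthogonal (mem_map_of_mem hg) hv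
  rw [← starProjection_eq_self_iff.mpr hf, ← inner_starProjection_left_eq_right, hPv,
    inner_zero_left]

theorem norm_starProjection_le_of_mem_orthogonal [CompleteSpace E] (hKL : K ⊓ Lᗮ = ⊥)
    {C : ℝ} (hC0 : 0 ≤ C)
    (hC : ∀ g ∈ L, ‖Kᗮ.starProjection g‖ ≤ C * ‖K.starProjection g‖) {h : E} (hh : h ∈ Lᗮ) :
    ‖K.starProjection h‖ ≤ C * ‖Kᗮ.starProjection h‖ := by
  have hmap : ∀ d ∈ L.map (K.starProjection : E →ₗ[𝕜] E),
      ‖⟪d, h⟫_𝕜‖ ≤ C * ‖d‖ * ‖Kᗮ.starProjection h‖ := by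
    rintro _ ⟨g, hg, rfl⟩
    have hsum : ⟪K.starProjection g, h⟫_𝕜 + ⟪Kᗮ.starProjection g, h⟫_𝕜 = 0 := by
      rw [← inner_add_left, starProjection_add_starProjection_orthogonal]
      exact inner_right_of_mem_orthogonal hg hh
    have hperp : ⟪Kᗮ.starProjection g, h⟫_𝕜
        = ⟪Kᗮ.starProjection g, Kᗮ.starProjection h⟫_𝕜 := by
      rw [← inner_starProjection_left_eq_right,
        starProjection_eq_self_iff.mpr (Kᗮ.starProjection_apply_mem g)]
    calc ‖⟪K.starProjection g, h⟫_𝕜‖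
        = ‖⟪Kᗮ.starProjection g, Kᗮ.starProjection h⟫_𝕜‖ := by
          rw [eq_neg_of_add_eq_zero_left hsum, hperp, norm_neg]
      _ ≤ ‖Kᗮ.starProjection g‖ * ‖Kᗮ.starProjection h‖ := norm_inner_le_norm _ _
      _ ≤ C * ‖K.starProjection g‖ * ‖Kᗮ.starProjection h‖ := by gcongr; exact hC g hg
  have hclosed : IsClosed {d | ‖⟪d, h⟫_𝕜‖ ≤ C * ‖d‖ * ‖Kᗮ.starProjection h‖} :=
    isClosed_le (by fun_prop) (by fun_prop)
  have hPh : ‖⟪K.starProjection h, h⟫_𝕜‖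
      ≤ C * ‖K.starProjection h‖ * ‖Kᗮ.starProjection h‖ :=
    closure_minimal hmap hclosed <| by
      rw [← topologicalClosure_coe]
      exact le_topologicalClosure_map_starProjection hKL (K.starProjection_apply_mem h)
  have hself : ⟪K.starProjection h, h⟫_𝕜 = ⟪K.starProjection h, K.starProjection h⟫_𝕜 := by
    conv_lhs => rw [← starProjection_eq_self_iff.mpr (K.starProjection_apply_mem h)]
    rw [inner_starProjection_left_eq_right]
  rw [hself, inner_self_eq_norm_sq_to_K, norm_pow, RCLike.norm_ofReal, abs_norm] at hPh
  nlinarith [norm_nonneg (K.starProjection h), mul_nonneg hC0 (norm_nonneg (Kᗮ.starProjection h))]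

theorem norm_starProjection_sub_starProjection_lt_one_iff [L.HasOrthogonalProjection]
    [CompleteSpace E] (hKL : K ⊓ Lᗮ = ⊥) :
    ‖K.starProjection - L.starProjection‖ < 1 ↔
      ∃ C : ℝ, ∀ g ∈ L, ‖Kᗮ.starProjection g‖ ≤ C * ‖K.starProjection g‖ := by
  constructor
  · intro hlt
    refine ⟨_ / √(1 - _ ^ 2), fun g hg => le_div_sqrt_one_sub_sq_mul (norm_nonneg _)
      (norm_nonneg _) (norm_nonneg _) hlt ?_
      ((norm_sq_eq_add_norm_sq_starProjection g K).trans (add_comm _ _))⟩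
    have hsub : (K.starProjection - L.starProjection) g = -Kᗮ.starProjection g := by
      rw [sub_apply, starProjection_eq_self_iff.mpr hg, starProjection_orthogonal_val, neg_sub]
    simpa only [hsub, norm_neg] using (K.starProjection - L.starProjection).le_opNorm g
  · rintro ⟨C, hC⟩
    obtain ⟨C, hC0, hC⟩ : ∃ C : ℝ, 0 ≤ C ∧
        ∀ g ∈ L, ‖Kᗮ.starProjection g‖ ≤ C * ‖K.starProjection g‖ :=
      ⟨max C 0, le_max_right C 0, fun g hg => (hC g hg).trans (by gcongr; exact le_max_left C 0)⟩
    refine lt_of_le_of_lt (norm_starProjection_sub_starProjection_le (by positivity)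
      (fun g hg => ?_) (fun h hh => ?_)) (div_sqrt_one_add_sq_lt_one C)
    · exact le_div_sqrt_one_add_sq_mul (norm_nonneg _) (norm_nonneg _) hC0 (hC g hg)
        ((norm_sq_eq_add_norm_sq_starProjection g K).trans (add_comm _ _))
    · exact le_div_sqrt_one_add_sq_mul (norm_nonneg _) (norm_nonneg _) hC0
        (norm_starProjection_le_of_mem_orthogonal hKL hC0 hC hh)
        (norm_sq_eq_add_norm_sq_starProjection h K)

end TwoSubspaces

/-- `L` is the graph subspace `G(K, X)`. -/
def IsGraphOver (L K : Submodule 𝕜 E) (X : E →ₗ.[𝕜] E) : Prop :=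
  X.domain ≤ K ∧ (∀ x : X.domain, X x ∈ Kᗮ) ∧ (L : Set E) = {u | ∃ x : X.domain, u = x + X x}

namespace IsGraphOver

variable {K L : Submodule 𝕜 E} {X : E →ₗ.[𝕜] E}

theorem add_mem (hG : L.IsGraphOver K X) (x : X.domain) : (x : E) + X x ∈ L := by
  change _ ∈ (L : Set E)
  rw [hG.2.2]
  exact ⟨x, rfl⟩

theorem exists_eq_add (hG : L.IsGraphOver K X) {g : E} (hg : g ∈ L) :
    ∃ x : X.domain, g = x + X x := by
  change g ∈ (L : Set E) at hg
  rwa [hG.2.2] at hg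

theorem starProjection_add [K.HasOrthogonalProjection] (hG : L.IsGraphOver K X)
    (x : X.domain) : K.starProjection (x + X x) = x :=
  eq_starProjection_of_mem_orthogonal' (hG.1 x.2) (hG.2.1 x) rfl

theorem starProjection_orthogonal_add [K.HasOrthogonalProjection] (hG : L.IsGraphOver K X)
    (x : X.domain) : Kᗮ.starProjection (x + X x) = X x :=
  eq_starProjection_of_mem_orthogonal' (hG.2.1 x) (K.le_orthogonal_orthogonal (hG.1 x.2))
    (add_comm _ _)

theorem exists_bound_iff [K.HasOrthogonalProjection] (hG : L.IsGraphOver K X) :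
    (∃ C : ℝ, ∀ x : X.domain, ‖X x‖ ≤ C * ‖(x : E)‖) ↔
      ∃ C : ℝ, ∀ g ∈ L, ‖Kᗮ.starProjection g‖ ≤ C * ‖K.starProjection g‖ := by
  refine exists_congr fun C => ⟨fun hC g hg => ?_, fun hC x => ?_⟩
  · obtain ⟨x, rfl⟩ := hG.exists_eq_add hg
    rw [hG.starProjection_add, hG.starProjection_orthogonal_add]
    exact hC x
  · simpa only [hG.starProjection_add, hG.starProjection_orthogonal_add] using hC _ (hG.add_mem x)

theorem orthogonal_inf_eq_bot [K.HasOrthogonalProjection] (hG : L.IsGraphOver K X) :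
    Kᗮ ⊓ L = ⊥ := by
  rw [eq_bot_iff]
  rintro f ⟨hfK, hfL⟩
  obtain ⟨x, rfl⟩ := hG.exists_eq_add hfL
  have hx : x = 0 := Subtype.ext <| by
    rw [← hG.starProjection_add x]
    exact (starProjection_apply_eq_zero_iff K).mpr hfK
  simp [hx]

theorem inf_orthogonal_eq_bot (hG : L.IsGraphOver K X)
    (hdense : (K : Set E) ⊆ closure (X.domain : Set E)) : K ⊓ Lᗮ = ⊥ := by
  rw [eq_bot_iff]
  rintro f ⟨hfK, hfL⟩
  have hf : f ∈ X.domainᗮ := by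
    rw [mem_orthogonal]
    intro x hx
    have hsum := inner_right_of_mem_orthogonal (hG.add_mem ⟨x, hx⟩) hfL
    rwa [inner_add_left, inner_left_of_mem_orthogonal hfK (hG.2.1 _), add_zero] at hsum
  rw [← orthogonal_closure] at hf
  rw [← Submodule.inf_orthogonal_eq_bot X.domain.topologicalClosure]
  refine ⟨?_, hf⟩
  rw [topologicalClosure_coe]
  exact hdense hfK

end IsGraphOver

def angularGraph (K L : Submodule 𝕜 E) : Submodule 𝕜 (E × E) :=
  K.prod Kᗮ ⊓ L.comap (LinearMap.fst 𝕜 E E + LinearMap.snd 𝕜 E E)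

noncomputable def angularOperator (K L : Submodule 𝕜 E) : E →ₗ.[𝕜] E :=
  (angularGraph K L).toLinearPMap

variable {K L : Submodule 𝕜 E}

@[simp]
theorem mem_angularGraph {x y : E} :
    (x, y) ∈ angularGraph K L ↔ (x ∈ K ∧ y ∈ Kᗮ) ∧ x + y ∈ L :=
  Iff.rfl

theorem isClosed_angularGraph (hK : IsClosed (K : Set E)) (hL : IsClosed (L : Set E)) :
    IsClosed (angularGraph K L : Set (E × E)) :=
  ((hK.preimage continuous_fst).inter (K.isClosed_orthogonal.preimage continuous_snd)).inter
    (hL.preimage continuous_add)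

theorem graph_angularOperator (hKL : Kᗮ ⊓ L = ⊥) :
    (angularOperator K L).graph = angularGraph K L := by
  refine toLinearPMap_graph_eq _ fun ⟨x, y⟩ hxy hx => ?_
  obtain rfl : x = 0 := hx
  rw [mem_angularGraph, zero_add] at hxy
  exact (mem_bot 𝕜).mp (hKL ▸ ⟨hxy.1.2, hxy.2⟩)

theorem angularOperator_domain [K.HasOrthogonalProjection] :
    (angularOperator K L).domain = L.map (K.starProjection : E →ₗ[𝕜] E) := by
  ext x
  constructor
  · rintro ⟨⟨x, y⟩, ⟨⟨hx, hy⟩, hxy⟩, rfl⟩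
    exact ⟨x + y, hxy, eq_starProjection_of_mem_orthogonal' hx hy rfl⟩
  · rintro ⟨g, hg, rfl⟩
    refine ⟨(K.starProjection g, Kᗮ.starProjection g), mem_angularGraph.mpr
      ⟨⟨K.starProjection_apply_mem g, Kᗮ.starProjection_apply_mem g⟩, ?_⟩, rfl⟩
    rwa [starProjection_add_starProjection_orthogonal]

theorem isGraphOver_angularOperator [K.HasOrthogonalProjection] (hKL : Kᗮ ⊓ L = ⊥) :
    L.IsGraphOver K (angularOperator K L) := by
  have hgraph (x : (angularOperator K L).domain) :
      ((x : E), angularOperator K L x) ∈ angularGraph K L :=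
    graph_angularOperator hKL ▸ (angularOperator K L).mem_graph x
  refine ⟨fun x hx => (hgraph ⟨x, hx⟩).1.1, fun x => (hgraph x).1.2,
    Set.ext fun g => ⟨fun hg => ?_, ?_⟩⟩
  · have hg' : (K.starProjection g, Kᗮ.starProjection g) ∈ (angularOperator K L).graph := by
      rw [graph_angularOperator hKL, mem_angularGraph, starProjection_add_starProjection_orthogonal]
      exact ⟨⟨K.starProjection_apply_mem g, Kᗮ.starProjection_apply_mem g⟩, hg⟩
    obtain ⟨x, hx, hXx⟩ := (LinearPMap.mem_graph_iff _).mp hg'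
    exact ⟨x, by rw [hx, hXx, starProjection_add_starProjection_orthogonal]⟩
  · rintro ⟨x, rfl⟩
    exact (hgraph x).2

end Submodule

open Submodule

/-- Let `P` and `Q` be orthogonal projections on a complex Hilbert space `H`.
Then `M₁₀(P,Q) = M₀₁(P,Q) = {0}` and `‖P - Q‖ = 1` hold iff `Ran Q = G(Ran P, X)` for a
closed densely defined operator `X` from `Ran P` to `(Ran P)ᗮ` which is unbounded, i.e.,
not norm-continuous on its domain. -/
theorem M10_M01_trivial_and_norm_sub_eq_one_iff_graph_of_unbounded
    {H : Type*} [NormedAddCommGroup H] [InnerProductSpace ℂ H] [CompleteSpace H]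
    (P Q : H →L[ℂ] H)
    (hP : IsIdempotentElem P) (hPsa : IsSelfAdjoint P)
    (hQ : IsIdempotentElem Q) (hQsa : IsSelfAdjoint Q) :
    ({f : H | P f = f ∧ Q f = 0} = {0} ∧ {f : H | P f = 0 ∧ Q f = f} = {0} ∧ ‖P - Q‖ = 1) ↔
      ∃ X : H →ₗ.[ℂ] H,
        X.domain ≤ LinearMap.range (P : H →ₗ[ℂ] H) ∧
        (∀ x : X.domain, X x ∈ (LinearMap.range (P : H →ₗ[ℂ] H))ᗮ) ∧
        ((LinearMap.range (P : H →ₗ[ℂ] H) : Submodule ℂ H) : Set H) ⊆ closure (X.domain : Set H) ∧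
        IsClosed (X.graph : Set (H × H)) ∧
        (¬ ∃ C : ℝ, ∀ x : X.domain, ‖X x‖ ≤ C * ‖(x : H)‖) ∧
        ((LinearMap.range (Q : H →ₗ[ℂ] H) : Submodule ℂ H) : Set H)
          = {u : H | ∃ x : X.domain, u = (x : H) + X x} := by
  have hKclosed := ContinuousLinearMap.IsIdempotentElem.isClosed_range hP
  have hLclosed := ContinuousLinearMap.IsIdempotentElem.isClosed_range hQ
  obtain ⟨_, hPK⟩ := isStarProjection_iff_eq_starProjection_range.mp ⟨hP, hPsa⟩
  obtain ⟨_, hQL⟩ := isStarProjection_iff_eq_starProjection_range.mp ⟨hQ, hQsa⟩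
  set K := LinearMap.range (P : H →ₗ[ℂ] H)
  set L := LinearMap.range (Q : H →ₗ[ℂ] H)
  rw [hPK, hQL]
  simp only [starProjection_eq_self_iff, starProjection_apply_eq_zero_iff,
    setOf_mem_and_mem_eq_singleton_zero_iff]
  constructor
  · rintro ⟨h10, h01, hnorm⟩
    have hG := isGraphOver_angularOperator h01
    refine ⟨angularOperator K L, hG.1, hG.2.1, ?_, ?_, ?_, hG.2.2⟩
    · rw [angularOperator_domain, ← topologicalClosure_coe]
      exact le_topologicalClosure_map_starProjection h10
    · rw [graph_angularOperator h01]
      exact isClosed_angularGraph hKclosed hLclosed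
    · rw [hG.exists_bound_iff, ← norm_starProjection_sub_starProjection_lt_one_iff h10, hnorm]
      exact lt_irrefl 1
  · rintro ⟨X, hdom, hran, hdense, -, hunb, hL⟩
    have hG : L.IsGraphOver K X := ⟨hdom, hran, hL⟩
    have h10 := hG.inf_orthogonal_eq_bot hdense
    refine ⟨h10, hG.orthogonal_inf_eq_bot, le_antisymm norm_starProjection_sub_starProjection_le_one
      (not_lt.mp fun hlt => hunb ?_)⟩
    rwa [hG.exists_bound_iff, ← norm_starProjection_sub_starProjection_lt_one_iff h10]
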